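/- arXiv:2602.12190 — 4 statements merged into one kernel-verified Lean document; each statement's English description precedes it below -/
import Mathlib

section
/- For all real h, h·tanh(h) − log(cosh(h)) ≤ 2·tanh(h)². -/
/-! Both sides are even in `h`, so take `h ≥ 0`. For `h ≤ 1` drop `log (cosh h) ≥ 0` and use
`h ≤ 2 tanh h`, which holds because `h ≤ sinh h` and `cosh h ≤ cosh 1 < 2`. For `h ≥ 1` use
`tanh h ≤ 1` and `cosh h ≥ exp h / 2` to bound the left side by `log 2 < 1`, while `sinh h ≥ 1`
gives `tanh h ^ 2 = sinh h ^ 2 / (sinh h ^ 2 + 1) ≥ 1 / 2`. -/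

namespace Real

lemma tanh_nonneg {x : ℝ} (hx : 0 ≤ x) : 0 ≤ tanh x := by
  rw [tanh_eq_sinh_div_cosh]
  exact div_nonneg (sinh_nonneg_iff.mpr hx) (cosh_pos x).le

lemma cosh_lt_two_of_abs_le_one {x : ℝ} (hx : |x| ≤ 1) : cosh x < 2 := by
  have hcosh_one : cosh 1 < 2 := by
    have := exp_one_lt_d9
    have : exp (-1) < 1 := exp_lt_one_iff.mpr (by norm_num)
    rw [cosh_eq]
    linarith
  calc cosh x ≤ cosh 1 := cosh_le_cosh.mpr (by rwa [abs_one])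
    _ < 2 := hcosh_one

lemma self_le_two_mul_tanh {x : ℝ} (h0 : 0 ≤ x) (h1 : x ≤ 1) : x ≤ 2 * tanh x := by
  have hsinh : x ≤ sinh x := self_le_sinh_iff.mpr h0
  have hcosh : cosh x < 2 := cosh_lt_two_of_abs_le_one (by rw [abs_of_nonneg h0]; exact h1)
  rw [tanh_eq_sinh_div_cosh, mul_div_assoc', le_div_iff₀ (cosh_pos x)]
  nlinarith

lemma sub_log_two_le_log_cosh (x : ℝ) : x - log 2 ≤ log (cosh x) := by
  have hcosh : exp x / 2 ≤ cosh x := by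
    have := exp_pos (-x)
    rw [cosh_eq]
    linarith
  calc x - log 2 = log (exp x / 2) := by rw [log_div (exp_pos x).ne' two_ne_zero, log_exp]
    _ ≤ log (cosh x) := log_le_log (by positivity) hcosh

lemma one_le_two_mul_tanh_sq {x : ℝ} (hx : 1 ≤ x) : 1 ≤ 2 * tanh x ^ 2 := by
  have hsinh : 1 ≤ sinh x := hx.trans (self_le_sinh_iff.mpr (by linarith))
  rw [tanh_eq_sinh_div_cosh, div_pow, cosh_sq, mul_div_assoc', le_div_iff₀ (by positivity)]
  nlinarith

lemma mul_tanh_sub_log_cosh_le_of_nonneg {x : ℝ} (hx : 0 ≤ x) :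
    x * tanh x - log (cosh x) ≤ 2 * tanh x ^ 2 := by
  rcases le_total x 1 with h1 | h1
  · have hlog : 0 ≤ log (cosh x) := log_nonneg (one_le_cosh x)
    have := self_le_two_mul_tanh hx h1
    nlinarith [tanh_nonneg hx]
  · have hlog := sub_log_two_le_log_cosh x
    have hle : x * tanh x ≤ x := mul_le_of_le_one_right hx (tanh_lt_one x).le
    have := log_two_lt_d9
    linarith [one_le_two_mul_tanh_sq h1]

end Real

theorem stmt_0 (h : ℝ) :
    h * Real.tanh h - Real.log (Real.cosh h) ≤ 2 * (Real.tanh h) ^ 2 := by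
  rcases le_total 0 h with hh | hh
  · exact Real.mul_tanh_sub_log_cosh_le_of_nonneg hh
  · simpa [Real.tanh_neg, Real.cosh_neg] using
      Real.mul_tanh_sub_log_cosh_le_of_nonneg (neg_nonneg.mpr hh)
end

section
/- There exists a constant C > 0 such that for all real x and y, |log(cosh(x+y)) − log(cosh x) − log(cosh y) − x·y| ≤ C(x²y² + x⁴ + y⁴). -/
/-!
With `g t = t ^ 2 / 2 - log (cosh t)`, the quantity to bound is `g x + g y - g (x + y)`, because
`(x + y) ^ 2 / 2 - x ^ 2 / 2 - y ^ 2 / 2 = x * y`. It therefore suffices that `0 ≤ g t ≤ t ^ 4 / 4`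
for every `t`: the lower bound is `cosh t ≤ exp (t ^ 2 / 2)`, the upper bound follows from
`1 + t ^ 2 / 2 ≤ cosh t` and `1 - 1 / c ≤ log c`.
-/

open Real

lemma one_add_sq_div_two_le_cosh (x : ℝ) : 1 + x ^ 2 / 2 ≤ cosh x := by
  set a := |x| / 2
  have ha_nonneg : 0 ≤ a := by positivity
  have ha_sq : a ^ 2 ≤ sinh a ^ 2 := pow_le_pow_left₀ ha_nonneg (self_le_sinh_iff.mpr ha_nonneg) 2
  have h_double : cosh x = 1 + 2 * sinh a ^ 2 := by
    rw [← cosh_abs, show |x| = 2 * a by ring, cosh_two_mul, cosh_sq]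
    ring
  have h_sq : x ^ 2 / 2 = 2 * a ^ 2 := by rw [← sq_abs x, show |x| = 2 * a by ring]; ring
  linarith

lemma log_cosh_le_sq_div_two (x : ℝ) : log (cosh x) ≤ x ^ 2 / 2 := by
  calc log (cosh x) ≤ log (exp (x ^ 2 / 2)) := log_le_log (cosh_pos x) (cosh_le_exp_half_sq x)
    _ = x ^ 2 / 2 := log_exp _

lemma sq_div_two_sub_pow_four_div_four_le_log_cosh (x : ℝ) :
    x ^ 2 / 2 - x ^ 4 / 4 ≤ log (cosh x) := by
  set u := x ^ 2 / 2 with hu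
  have hu_nonneg : 0 ≤ u := by positivity
  have h_inv : (cosh x)⁻¹ ≤ (1 + u)⁻¹ :=
    inv_anti₀ (by positivity) (one_add_sq_div_two_le_cosh x)
  -- `(1 + u) * (1 - u + u ^ 2) = 1 + u ^ 3`
  have h_frac : u - u ^ 2 ≤ 1 - (1 + u)⁻¹ := by
    rw [le_sub_comm, inv_le_iff_one_le_mul₀ (by positivity)]
    nlinarith [pow_nonneg hu_nonneg 3]
  have h_log : 1 - (cosh x)⁻¹ ≤ log (cosh x) := one_sub_inv_le_log_of_pos (cosh_pos x)
  have h_u_sq : u ^ 2 = x ^ 4 / 4 := by rw [hu]; ring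
  linarith

theorem stmt_10 :
    ∃ C > (0 : ℝ), ∀ x y : ℝ,
      |Real.log (Real.cosh (x + y)) - Real.log (Real.cosh x) - Real.log (Real.cosh y)
        - x * y| ≤ C * (x ^ 2 * y ^ 2 + x ^ 4 + y ^ 4) := by
  refine ⟨2, two_pos, fun x y => ?_⟩
  have hxy_upper := log_cosh_le_sq_div_two (x + y)
  have hxy_lower := sq_div_two_sub_pow_four_div_four_le_log_cosh (x + y)
  have hx_upper := log_cosh_le_sq_div_two x
  have hx_lower := sq_div_two_sub_pow_four_div_four_le_log_cosh x
  have hy_upper := log_cosh_le_sq_div_two y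
  have hy_lower := sq_div_two_sub_pow_four_div_four_le_log_cosh y
  have h_pow_four : (x + y) ^ 4 ≤ 8 * (x ^ 4 + y ^ 4) := by
    nlinarith [sq_nonneg (x - y), sq_nonneg (x + y), sq_nonneg (x ^ 2 - y ^ 2)]
  have hx_four : 0 ≤ x ^ 4 := by positivity
  have hy_four : 0 ≤ y ^ 4 := by positivity
  have hxy_sq : 0 ≤ x ^ 2 * y ^ 2 := by positivity
  have h_cross : x * y = (x + y) ^ 2 / 2 - x ^ 2 / 2 - y ^ 2 / 2 := by ring
  rw [abs_le, h_cross]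
  constructor <;> linarith
end

section
/- For every integer p ≥ 1 and real numbers x_1,…,x_p, one has log(cosh(Σ_a x_a)) − Σ_a log(cosh(x_a)) ≤ ((p−1)/2)·Σ_{a=1}^p x_a². -/
/-!
Since `cosh (s + t) = cosh s * cosh t * (1 + tanh s * tanh t)` and `|tanh u| ≤ |u|`, the
function `log ∘ cosh` is additive up to the error `|s| * |t|`. Adding the terms one at a time,
the defect of additivity of `log ∘ cosh` on a sum is at most `∑_{a < b} |x a| * |x b|`, and
`2 * |x a| * |x b| ≤ x a ^ 2 + x b ^ 2` bounds this by `(p - 1) / 2 * ∑ a, x a ^ 2`.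
-/

open Finset Real

namespace Real

/-- The mean value theorem, with `sinh' = cosh ≤ cosh u` on `[-|u|, |u|]`. -/
lemma abs_sinh_le_abs_mul_cosh (u : ℝ) : |sinh u| ≤ |u| * cosh u := by
  have hu : u ∈ Set.Icc (-|u|) |u| := abs_le.mp le_rfl
  have h0 : (0 : ℝ) ∈ Set.Icc (-|u|) |u| := abs_le.mp (by simp)
  have h := (convex_Icc (-|u|) |u|).norm_image_sub_le_of_norm_hasDerivWithin_le
    (fun v _ ↦ (hasDerivAt_sinh v).hasDerivWithinAt)
    (fun v hv ↦ show ‖cosh v‖ ≤ cosh u by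
      rw [norm_of_nonneg (cosh_pos v).le, cosh_le_cosh]; exact abs_le.mpr hv) h0 hu
  simpa [mul_comm] using h

lemma sinh_mul_sinh_le (s t : ℝ) : sinh s * sinh t ≤ |s| * |t| * (cosh s * cosh t) :=
  calc sinh s * sinh t ≤ |sinh s| * |sinh t| := by rw [← abs_mul]; exact le_abs_self _
    _ ≤ (|s| * cosh s) * (|t| * cosh t) :=
        mul_le_mul (abs_sinh_le_abs_mul_cosh s) (abs_sinh_le_abs_mul_cosh t) (abs_nonneg _)
          (by positivity)
    _ = |s| * |t| * (cosh s * cosh t) := by ring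

lemma cosh_add_le (s t : ℝ) : cosh (s + t) ≤ cosh s * cosh t * exp (|s| * |t|) :=
  calc cosh (s + t) = cosh s * cosh t + sinh s * sinh t := cosh_add s t
    _ ≤ cosh s * cosh t * (1 + |s| * |t|) := by nlinarith [sinh_mul_sinh_le s t]
    _ ≤ cosh s * cosh t * exp (|s| * |t|) := by
        gcongr
        linarith [add_one_le_exp (|s| * |t|)]

lemma log_cosh_add_le (s t : ℝ) :
    log (cosh (s + t)) ≤ log (cosh s) + log (cosh t) + |s| * |t| :=
  calc log (cosh (s + t)) ≤ log (cosh s * cosh t * exp (|s| * |t|)) :=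
        log_le_log (cosh_pos _) (cosh_add_le s t)
    _ = log (cosh s) + log (cosh t) + |s| * |t| := by
        rw [log_mul (by positivity) (by positivity), log_mul (cosh_pos _).ne' (cosh_pos _).ne',
          log_exp]

/-- `((∑ |x a|) ^ 2 - ∑ x a ^ 2) / 2` is the sum of `|x a| * |x b|` over pairs `a ≠ b`. -/
lemma log_cosh_sum_le {ι : Type*} (s : Finset ι) (x : ι → ℝ) :
    log (cosh (∑ a ∈ s, x a)) ≤
      ∑ a ∈ s, log (cosh (x a)) + ((∑ a ∈ s, |x a|) ^ 2 - ∑ a ∈ s, x a ^ 2) / 2 := by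
  classical
  induction s using Finset.induction_on with
  | empty => simp
  | insert b s hb ih =>
    rw [sum_insert hb, sum_insert hb, sum_insert hb, sum_insert hb]
    have hcross : |x b| * |∑ a ∈ s, x a| ≤ |x b| * ∑ a ∈ s, |x a| :=
      mul_le_mul_of_nonneg_left (abs_sum_le_sum_abs x s) (abs_nonneg _)
    nlinarith [log_cosh_add_le (x b) (∑ a ∈ s, x a), sq_abs (x b)]

end Real

theorem stmt_12_general (p : ℕ) (x : Fin p → ℝ) :
    Real.log (Real.cosh (∑ a, x a)) - ∑ a, Real.log (Real.cosh (x a))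
      ≤ ((p : ℝ) - 1) / 2 * ∑ a, (x a) ^ 2 := by
  have hdefect := Real.log_cosh_sum_le univ x
  have hcauchy : (∑ a, |x a|) ^ 2 ≤ p * ∑ a, x a ^ 2 := by
    simpa [sq_abs] using sq_sum_le_card_mul_sum_sq (s := univ) (f := fun a ↦ |x a|)
  linarith

theorem stmt_12 (p : ℕ) (hp : 1 ≤ p) (x : Fin p → ℝ) :
    Real.log (Real.cosh (∑ a, x a)) - ∑ a, Real.log (Real.cosh (x a))
      ≤ ((p : ℝ) - 1) / 2 * ∑ a, (x a) ^ 2 :=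
  stmt_12_general p x
end

section
/- For fixed λ > 0, the total variation distance between the Gaussian measures N(0, I_M) and N(0, (1+λ)I_M) on ℝ^M converges to 1 as M → ∞. -/
/-
Under `N(0, v I_M)` the squared norm `∑ xᵢ²` concentrates at `v M`. A Chernoff bound with
`E exp (c x²) = (1 - 2 v c)^(-1/2)` shows that the probability of `∑ xᵢ² ≥ a M`
(for `a > v`), resp. `∑ xᵢ² ≤ a M` (for `a < v`), decays geometrically in `M`. For
`1 < a < 1 + λ` the set `{∑ xᵢ² < a M}` therefore has probability tending to `1` under
`N(0, I_M)` and to `0` under `N(0, (1 + λ) I_M)`, which forces the total variation distance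
to `1`.
-/

open MeasureTheory ProbabilityTheory Real Filter Topology
open scoped NNReal

section TotalVariation

variable {α : Type*} [MeasurableSpace α]

noncomputable def tvDist (μ ν : Measure α) : ℝ :=
  ⨆ (A : Set α) (_ : MeasurableSet A), |μ.real A - ν.real A|

variable (μ ν : Measure α) [IsProbabilityMeasure μ] [IsProbabilityMeasure ν]

lemma abs_measureReal_sub_le_one (A : Set α) : |μ.real A - ν.real A| ≤ 1 :=
  abs_sub_le_of_nonneg_of_le measureReal_nonneg measureReal_le_one measureReal_nonneg
    measureReal_le_one

lemma tvDist_le_one : tvDist μ ν ≤ 1 :=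
  Real.iSup_le (fun A => Real.iSup_le (fun _ => abs_measureReal_sub_le_one μ ν A) zero_le_one)
    zero_le_one

lemma abs_measureReal_sub_le_tvDist {A : Set α} (hA : MeasurableSet A) :
    |μ.real A - ν.real A| ≤ tvDist μ ν := by
  have hbdd :
      BddAbove (Set.range fun B : Set α => ⨆ (_ : MeasurableSet B), |μ.real B - ν.real B|) :=
    ⟨1, Set.forall_mem_range.2 fun B =>
      Real.iSup_le (fun _ => abs_measureReal_sub_le_one μ ν B) zero_le_one⟩
  calc |μ.real A - ν.real A| = ⨆ (_ : MeasurableSet A), |μ.real A - ν.real A| :=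
        (ciSup_pos (f := fun _ => |μ.real A - ν.real A|) hA).symm
    _ ≤ tvDist μ ν := le_ciSup hbdd A

end TotalVariation

lemma tendsto_tvDist_one {ι : Type*} {X : ι → Type*} [∀ i, MeasurableSpace (X i)]
    {μ ν : ∀ i, Measure (X i)} [∀ i, IsProbabilityMeasure (μ i)]
    [∀ i, IsProbabilityMeasure (ν i)]
    {l : Filter ι} {A : ∀ i, Set (X i)} (hA : ∀ i, MeasurableSet (A i))
    (hμ : Tendsto (fun i => (μ i).real (A i)ᶜ) l (𝓝 0))
    (hν : Tendsto (fun i => (ν i).real (A i)) l (𝓝 0)) :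
    Tendsto (fun i => tvDist (μ i) (ν i)) l (𝓝 1) := by
  refine tendsto_of_tendsto_of_tendsto_of_le_of_le
    (by simpa using (tendsto_const_nhds.sub hμ).sub hν) tendsto_const_nhds (fun i => ?_)
    (fun i => tvDist_le_one (μ i) (ν i))
  calc 1 - (μ i).real (A i)ᶜ - (ν i).real (A i) = (μ i).real (A i) - (ν i).real (A i) := by
        rw [probReal_compl_eq_one_sub (hA i)]; ring
    _ ≤ tvDist (μ i) (ν i) := (le_abs_self _).trans (abs_measureReal_sub_le_tvDist _ _ (hA i))

lemma measureReal_pi_le_exp_neg_mul_integral_pow {ι E : Type*} [Fintype ι] [MeasurableSpace E]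
    (μ : Measure E) [IsFiniteMeasure μ] {g : E → ℝ} (hg : Integrable (fun y => exp (g y)) μ)
    (r : ℝ) :
    (Measure.pi fun _ : ι => μ).real {x | r ≤ ∑ i, g (x i)}
      ≤ exp (-r) * (∫ y, exp (g y) ∂μ) ^ Fintype.card ι := by
  have hprod : ∀ x : ι → E, exp (1 * ∑ i, g (x i)) = ∏ i, exp (g (x i)) := by
    simp [exp_sum]
  have h := measure_ge_le_exp_mul_mgf (X := fun x : ι → E => ∑ i, g (x i))
    (μ := Measure.pi fun _ => μ) r zero_le_one
    (by simpa only [hprod] using Integrable.fintype_prod fun _ => hg)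
  rwa [mgf, funext hprod, integral_fintype_prod_eq_pow (fun y => exp (g y)), neg_one_mul] at h

lemma gaussianPDFReal_mul_exp_mul_sq (v : ℝ≥0) (c x : ℝ) :
    gaussianPDFReal 0 v x * exp (c * x ^ 2)
      = (√(2 * π * v))⁻¹ * exp (-((2 * (v : ℝ))⁻¹ - c) * x ^ 2) := by
  rw [gaussianPDFReal_def, mul_assoc, ← exp_add]
  congr 2
  ring

lemma inv_two_mul_sub_pos {v : ℝ≥0} {c : ℝ} (hv : v ≠ 0) (hc : 2 * v * c < 1) :
    0 < (2 * (v : ℝ))⁻¹ - c := by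
  have h2v : 0 < 2 * (v : ℝ) := by positivity
  have h : 2 * (v : ℝ) * ((2 * (v : ℝ))⁻¹ - c) = 1 - 2 * v * c := by field_simp
  exact pos_of_mul_pos_right (h ▸ sub_pos.2 hc) h2v.le

lemma integrable_exp_mul_sq_gaussianReal {v : ℝ≥0} {c : ℝ} (hc : 2 * v * c < 1) :
    Integrable (fun x => exp (c * x ^ 2)) (gaussianReal 0 v) := by
  rcases eq_or_ne v 0 with rfl | hv
  · simpa using integrable_dirac (by simp)
  rw [gaussianReal_of_var_ne_zero 0 hv, integrable_withDensity_iff (measurable_gaussianPDF 0 v)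
    (ae_of_all _ fun _ => gaussianPDF_lt_top)]
  simp_rw [toReal_gaussianPDF, mul_comm (exp _), gaussianPDFReal_mul_exp_mul_sq]
  exact (integrable_exp_neg_mul_sq (inv_two_mul_sub_pos hv hc)).const_mul _

lemma integral_exp_mul_sq_gaussianReal {v : ℝ≥0} {c : ℝ} (hc : 2 * v * c < 1) :
    ∫ x, exp (c * x ^ 2) ∂gaussianReal 0 v = (√(1 - 2 * v * c))⁻¹ := by
  rcases eq_or_ne v 0 with rfl | hv
  · simp
  rw [integral_gaussianReal_eq_integral_smul hv]
  simp_rw [smul_eq_mul, gaussianPDFReal_mul_exp_mul_sq]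
  have hb := inv_two_mul_sub_pos hv hc
  have hv' : (0 : ℝ) < v := by positivity
  rw [integral_const_mul, integral_gaussian, ← sqrt_inv, ← sqrt_inv,
    ← sqrt_mul (by positivity)]
  congr 1
  field_simp

lemma measureReal_gaussianPi_le_pow {ι : Type*} [Fintype ι] {v : ℝ≥0} {c : ℝ}
    (hc : 2 * v * c < 1) (a : ℝ) :
    (Measure.pi fun _ : ι => gaussianReal 0 v).real
        {x | c * (a * Fintype.card ι) ≤ c * ∑ i, x i ^ 2}
      ≤ (exp (-(c * a)) * (√(1 - 2 * v * c))⁻¹) ^ Fintype.card ι := by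
  have h := measureReal_pi_le_exp_neg_mul_integral_pow (ι := ι) (gaussianReal 0 v)
    (integrable_exp_mul_sq_gaussianReal hc) (c * (a * Fintype.card ι))
  rw [integral_exp_mul_sq_gaussianReal hc] at h
  convert h using 3
  · simp [Finset.mul_sum]
  · rw [mul_pow, ← exp_nat_mul]; ring_nf

lemma exists_exp_neg_mul_mul_inv_sqrt_lt_one {v a : ℝ} (hv : 0 < v) (ha : 0 < a)
    (hav : a ≠ v) :
    ∃ c, 2 * v * c < 1 ∧ 0 < c * (a - v) ∧
      exp (-(c * a)) * (√(1 - 2 * v * c))⁻¹ < 1 := by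
  have hav' : a - v ≠ 0 := sub_ne_zero.2 hav
  refine ⟨(a - v) / (4 * a * v), ?_, ?_, ?_⟩
  · rw [show 2 * v * ((a - v) / (4 * a * v)) = (a - v) / (2 * a) by field_simp; ring,
      div_lt_one (by positivity)]
    linarith
  · rw [div_mul_eq_mul_div, ← sq]
    positivity
  have hsq : 1 - 2 * v * ((a - v) / (4 * a * v)) = (a + v) / (2 * a) := by field_simp; ring
  have hexp : exp (-((a - v) / (4 * a * v) * a)) ^ 2 = (exp ((a - v) / (2 * v)))⁻¹ := by
    rw [← exp_nat_mul, ← exp_neg]; congr 1; field_simp; ring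
  have hlt : (a + v) / (2 * v) < exp ((a - v) / (2 * v)) := by
    convert add_one_lt_exp (x := (a - v) / (2 * v)) (div_ne_zero hav' (by positivity)) using 1
    field_simp; ring
  -- `exp (-2ca) < 2v/(a+v) ≤ (a+v)/(2a) = 1 - 2vc`, by `exp x > 1 + x` and AM-GM.
  have key : exp (-((a - v) / (4 * a * v) * a)) < √(1 - 2 * v * ((a - v) / (4 * a * v))) := by
    rw [lt_sqrt (exp_pos _).le, hexp, hsq]
    calc (exp ((a - v) / (2 * v)))⁻¹ < ((a + v) / (2 * v))⁻¹ :=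
          inv_strictAnti₀ (by positivity) hlt
      _ = 2 * v / (a + v) := inv_div _ _
      _ ≤ (a + v) / (2 * a) := by
          rw [div_le_div_iff₀ (by positivity) (by positivity)]; nlinarith [sq_nonneg (a - v)]
  rwa [← div_eq_mul_inv, div_lt_one (lt_of_le_of_lt (exp_pos _).le key)]

lemma exists_tendsto_measureReal_gaussianPi_zero {v : ℝ≥0} {a : ℝ} (hv : v ≠ 0) (ha : 0 < a)
    (hav : a ≠ v) :
    ∃ c, 0 < c * (a - v) ∧
      Tendsto (fun M : ℕ => (Measure.pi fun _ : Fin M => gaussianReal 0 v).real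
        {x | c * (a * M) ≤ c * ∑ i, x i ^ 2}) atTop (𝓝 0) := by
  obtain ⟨c, hc, hsign, hρ⟩ := exists_exp_neg_mul_mul_inv_sqrt_lt_one (by positivity) ha hav
  refine ⟨c, hsign, squeeze_zero (fun _ => measureReal_nonneg) (fun M => ?_)
    (tendsto_pow_atTop_nhds_zero_of_lt_one (by positivity) hρ)⟩
  simpa using measureReal_gaussianPi_le_pow (ι := Fin M) hc a

lemma tendsto_measureReal_gaussianPi_sum_sq_ge {v : ℝ≥0} {a : ℝ} (hv : v ≠ 0)
    (hva : v < a) :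
    Tendsto (fun M : ℕ => (Measure.pi fun _ : Fin M => gaussianReal 0 v).real
      {x | a * M ≤ ∑ i, x i ^ 2}) atTop (𝓝 0) := by
  obtain ⟨c, hsign, h⟩ := exists_tendsto_measureReal_gaussianPi_zero hv
    ((NNReal.coe_nonneg v).trans_lt hva) hva.ne'
  have hc : 0 < c := pos_of_mul_pos_left hsign (sub_pos.2 hva).le
  simpa only [mul_le_mul_iff_right₀ hc] using h

lemma tendsto_measureReal_gaussianPi_sum_sq_le {v : ℝ≥0} {a : ℝ} (ha : 0 < a) (hav : a < v) :
    Tendsto (fun M : ℕ => (Measure.pi fun _ : Fin M => gaussianReal 0 v).real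
      {x | ∑ i, x i ^ 2 ≤ a * M}) atTop (𝓝 0) := by
  obtain ⟨c, hsign, h⟩ := exists_tendsto_measureReal_gaussianPi_zero
    (NNReal.coe_pos.1 (ha.trans hav)).ne' ha hav.ne
  have hc : c < 0 := neg_of_mul_pos_left hsign (sub_neg.2 hav).le
  simpa only [mul_le_mul_left_of_neg hc] using h

/-- The total variation distance between the standard Gaussian `N(0, I_M)` and
`N(0, (1+λ)I_M)` on `ℝ^M` tends to `1` as `M → ∞`, for fixed `λ > 0`.  Total
variation is expressed via the sup over measurable sets. -/
theorem stmt_18 (l : ℝ) (hl : 0 < l) :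
    Filter.Tendsto
      (fun M : ℕ =>
        ⨆ (A : Set (Fin M → ℝ)) (_ : MeasurableSet A),
          |((Measure.pi fun _ : Fin M => gaussianReal 0 1) A).toReal
            - ((Measure.pi fun _ : Fin M => gaussianReal 0 (1 + l).toNNReal) A).toReal|)
      Filter.atTop (nhds 1) := by
  have hv : ((1 + l).toNNReal : ℝ) = 1 + l := Real.coe_toNNReal _ (by linarith)
  have hA : ∀ M : ℕ, MeasurableSet {x : Fin M → ℝ | ∑ i, x i ^ 2 < (1 + l / 2) * M} :=
    fun M => measurableSet_lt (by fun_prop) (by fun_prop)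
  refine tendsto_tvDist_one hA ?_ ?_
  · simpa [Set.compl_ofPred, not_lt] using
      tendsto_measureReal_gaussianPi_sum_sq_ge (v := 1) one_ne_zero (a := 1 + l / 2)
        (by simp; linarith)
  · refine squeeze_zero (fun _ => measureReal_nonneg)
      (fun M => measureReal_mono (s₂ := {x : Fin M → ℝ | ∑ i, x i ^ 2 ≤ (1 + l / 2) * M})
        (Set.ofPred_subset_ofPred.2 fun _ => le_of_lt) (measure_ne_top _ _)) ?_
    exact tendsto_measureReal_gaussianPi_sum_sq_le (v := (1 + l).toNNReal) (a := 1 + l / 2)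
      (by positivity) (by rw [hv]; linarith)
end
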